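/- Let A be an expansive dilation with dilated balls 𝔅 = {x + B_k : x ∈ ℝⁿ, k ∈ ℤ}, s ∈ ℤ_{≥0}, and B ∈ 𝔅. There exists a constant C > 0, independent of f and B (depending only on n, s, A), such that for every f ∈ L¹(B), sup_{x∈B} |P_B^s(f)(x)| ≤ C · (1/|B|) ∫_B |f(x)| dx, where P_B^s(f) is the minimizing polynomial of f of degree ≤ s on B. -/

import Mathlib

/-!
Polynomials of degree at most `s` form a finite-dimensional space, so on the fixed bounded open
set `Δ` their sup norm is dominated by their `L²(Δ)` norm: `sup_Δ R² ≤ c ∫_Δ R²`. Since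
polynomials of degree `≤ s` are stable under affine substitution, the change of variables
`x = x₀ + A^k y` carries this to every ball `B = x₀ + A^k Δ` with constant `c / |det A^k|`, and
`|B| = |det A^k| |Δ|`. Testing the orthogonality relation against `Q` itself gives
`∫_B Q² = ∫_B Q f ≤ sup_B |Q| ∫_B |f|`; dividing by `sup_B |Q|` gives the estimate.
-/

open MeasureTheory
open scoped Pointwise

theorem Continuous.integrableOn_of_isBounded {X E : Type*} [MetricSpace X] [ProperSpace X]
    [MeasurableSpace X] [BorelSpace X] {μ : Measure X} [IsFiniteMeasureOnCompacts μ]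
    [NormedAddCommGroup E] {f : X → E} (hf : Continuous f) {s : Set X}
    (hs : Bornology.IsBounded s) : IntegrableOn f s μ :=
  (hf.continuousOn.integrableOn_compact hs.isCompact_closure).mono_set subset_closure

theorem exists_norm_apply_le_mul_norm {𝕜 X E : Type*} [NontriviallyNormedField 𝕜]
    [CompleteSpace 𝕜] [TopologicalSpace X] [NormedAddCommGroup E] [NormedSpace 𝕜 E]
    [FiniteDimensional 𝕜 E] {K : Set X} (hK : IsCompact K) (ev : X → E →ₗ[𝕜] 𝕜)
    (hev : ∀ v, Continuous fun x => ev x v) :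
    ∃ C, ∀ x ∈ K, ∀ v, ‖ev x v‖ ≤ C * ‖v‖ := by
  let L : X → E →L[𝕜] 𝕜 := fun x => LinearMap.toContinuousLinearMap (ev x)
  have hL : Continuous L := continuous_clm_apply.2 hev
  obtain ⟨C, hC⟩ := hK.exists_bound_of_continuousOn hL.continuousOn
  exact ⟨C, fun x hx v => ((L x).le_opNorm v).trans (by gcongr; exact hC x hx)⟩

theorem le_mul_setIntegral_abs_of_setIntegral_mul_sub_eq_zero {α : Type*} [MeasurableSpace α]
    {μ : Measure α} {V : Set α} (hV : MeasurableSet V) {q f : α → ℝ} {m K : ℝ} (hm : 0 ≤ m)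
    (hK : 0 ≤ K) (hf : IntegrableOn f V μ) (hq : AEStronglyMeasurable q (μ.restrict V))
    (hqm : ∀ x ∈ V, |q x| ≤ m) (hq2 : IntegrableOn (fun x => q x ^ 2) V μ)
    (horth : ∫ x in V, q x * (f x - q x) ∂μ = 0) (hsq : m ^ 2 ≤ K * ∫ x in V, q x ^ 2 ∂μ) :
    m ≤ K * ∫ x in V, |f x| ∂μ := by
  have hqf : IntegrableOn (fun x => q x * f x) V μ :=
    hf.bdd_mul hq (ae_restrict_of_forall_mem hV hqm)
  have hq2_eq : ∫ x in V, q x ^ 2 ∂μ = ∫ x in V, q x * f x ∂μ := by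
    rw [eq_comm, ← sub_eq_zero, ← integral_sub hqf hq2, ← horth]
    congr 1 with x
    ring
  have hqf_le : ∫ x in V, q x * f x ∂μ ≤ m * ∫ x in V, |f x| ∂μ := by
    rw [← integral_const_mul]
    refine setIntegral_mono_on hqf (hf.abs.const_mul m) hV fun x hx => ?_
    calc q x * f x ≤ |q x| * |f x| := (le_abs_self _).trans (abs_mul _ _).le
      _ ≤ m * |f x| := by gcongr; exact hqm x hx
  have : m * m ≤ m * (K * ∫ x in V, |f x| ∂μ) := by
    rw [hq2_eq] at hsq
    nlinarith [mul_le_mul_of_nonneg_left hqf_le hK]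
  rcases hm.eq_or_lt with h | h
  · rw [← h]
    exact mul_nonneg hK (integral_nonneg fun x => abs_nonneg _)
  · exact le_of_mul_le_mul_left this h

namespace MvPolynomial

theorem totalDegree_bind₁_le_mul {R σ τ : Type*} [CommSemiring R] (g : σ → MvPolynomial τ R)
    {d : ℕ} (hg : ∀ i, (g i).totalDegree ≤ d) (p : MvPolynomial σ R) :
    (bind₁ g p).totalDegree ≤ p.totalDegree * d := by
  rw [← aeval_eq_bind₁, aeval_def, eval₂_eq]
  refine (totalDegree_finsetSum _ _).trans (Finset.sup_le fun m hm => ?_)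
  refine (totalDegree_mul _ _).trans ?_
  rw [algebraMap_eq, totalDegree_C, zero_add]
  refine (totalDegree_finsetProd _ _).trans ?_
  calc ∑ i ∈ m.support, (g i ^ m i).totalDegree
      ≤ ∑ i ∈ m.support, m i * d :=
        Finset.sum_le_sum fun i _ => (totalDegree_pow _ _).trans (Nat.mul_le_mul_left _ (hg i))
    _ = (m.sum fun _ k => k) * d := by rw [Finsupp.sum, Finset.sum_mul]
    _ ≤ p.totalDegree * d := Nat.mul_le_mul_right _ (le_totalDegree hm)

variable {σ : Type*} [Fintype σ]

theorem eq_zero_of_eqOn_zero {p : MvPolynomial σ ℝ} {U : Set (σ → ℝ)} (hU : IsOpen U)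
    (hne : U.Nonempty) (h : Set.EqOn (eval · p) 0 U) : p = 0 := by
  obtain ⟨x₀, hx₀⟩ := hne
  have := (AnalyticOnNhd.eval_mvPolynomial p).eqOn_zero_of_preconnected_of_eventuallyEq_zero
    isPreconnected_univ (Set.mem_univ x₀) (Filter.eventually_of_mem (hU.mem_nhds hx₀) h)
  exact funext fun x => by simpa using this (Set.mem_univ x)

theorem eq_zero_of_setIntegral_mul_self_eq_zero {p : MvPolynomial σ ℝ} {U : Set (σ → ℝ)}
    (hU : IsOpen U) (hne : U.Nonempty)
    (hint : IntegrableOn (fun x => eval x p * eval x p) U)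
    (h : ∫ x in U, eval x p * eval x p = 0) : p = 0 := by
  have hae := (setIntegral_eq_zero_iff_of_nonneg_ae
    (Filter.Eventually.of_forall fun x => mul_self_nonneg (eval x p)) hint).1 h
  refine eq_zero_of_eqOn_zero hU hne fun x hx => ?_
  have := Measure.eqOn_open_of_ae_eq hae hU
    (p.continuous_eval.mul p.continuous_eval).continuousOn continuousOn_const hx
  exact mul_self_eq_zero.1 this

variable {U : Set (σ → ℝ)}

noncomputable abbrev l2InnerCore (hU : IsOpen U) (hne : U.Nonempty)
    (hbdd : Bornology.IsBounded U) (s : ℕ) :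
    InnerProductSpace.Core ℝ (restrictTotalDegree σ ℝ s) where
  inner p q := ∫ x in U, eval x p.1 * eval x q.1
  conj_inner_symm p q := by
    simp only [starRingEnd_apply, star_trivial, mul_comm]
  re_inner_nonneg p :=
    setIntegral_nonneg hU.measurableSet fun x _ => mul_self_nonneg (eval x p.1)
  definite p hp := Subtype.ext <| eq_zero_of_setIntegral_mul_self_eq_zero hU hne
    ((p.1.continuous_eval.mul p.1.continuous_eval).integrableOn_of_isBounded hbdd) hp
  add_left p q r := by
    simp only [Submodule.coe_add, map_add, add_mul]
    exact integral_add
      ((p.1.continuous_eval.mul r.1.continuous_eval).integrableOn_of_isBounded hbdd)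
      ((q.1.continuous_eval.mul r.1.continuous_eval).integrableOn_of_isBounded hbdd)
  smul_left p q a := by
    simp only [Submodule.coe_smul, smul_eval, conj_trivial, mul_assoc]
    exact integral_const_mul a _

theorem exists_sq_eval_le_mul_setIntegral_sq (hU : IsOpen U) (hne : U.Nonempty)
    (hbdd : Bornology.IsBounded U) (s : ℕ) :
    ∃ c, 0 < c ∧ ∀ p : MvPolynomial σ ℝ, p.totalDegree ≤ s →
      ∀ x ∈ closure U, eval x p ^ 2 ≤ c * ∫ y in U, eval y p ^ 2 := by
  let core := l2InnerCore hU hne hbdd s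
  let _ : NormedAddCommGroup (restrictTotalDegree σ ℝ s) := core.toNormedAddCommGroup
  let _ : InnerProductSpace ℝ (restrictTotalDegree σ ℝ s) := InnerProductSpace.ofCore core.toCore
  obtain ⟨C, hC⟩ := exists_norm_apply_le_mul_norm hbdd.isCompact_closure
    (fun x => (aeval x).toLinearMap ∘ₗ (restrictTotalDegree σ ℝ s).subtype)
    fun p => by simpa using p.1.continuous_eval
  refine ⟨C ^ 2 + 1, by positivity, fun p hp x hx => ?_⟩
  let q : restrictTotalDegree σ ℝ s := ⟨p, (mem_restrictTotalDegree _ _ _).2 hp⟩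
  have hnorm : ‖q‖ ^ 2 = ∫ y in U, eval y p ^ 2 := by
    rw [← real_inner_self_eq_norm_sq]
    simp only [sq]
    rfl
  have hq : |eval x p| ≤ C * ‖q‖ := by simpa using hC x hx q
  calc eval x p ^ 2 = |eval x p| ^ 2 := (sq_abs _).symm
    _ ≤ (C * ‖q‖) ^ 2 := by gcongr
    _ = C ^ 2 * ‖q‖ ^ 2 := mul_pow _ _ _
    _ ≤ (C ^ 2 + 1) * ‖q‖ ^ 2 := by gcongr; linarith
    _ = (C ^ 2 + 1) * ∫ y in U, eval y p ^ 2 := by rw [hnorm]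

theorem exists_eval_eq_eval_add_mulVec (p : MvPolynomial σ ℝ) (M : Matrix σ σ ℝ) (x₀ : σ → ℝ) :
    ∃ r : MvPolynomial σ ℝ, r.totalDegree ≤ p.totalDegree ∧
      ∀ y, eval y r = eval (x₀ + M.mulVec y) p := by
  let g : σ → MvPolynomial σ ℝ := fun i => C (x₀ i) + ∑ j, C (M i j) * X j
  have hg : ∀ i, (g i).totalDegree ≤ 1 := fun i => by
    refine (totalDegree_add _ _).trans (max_le (by simp) ?_)
    refine (totalDegree_finsetSum _ _).trans (Finset.sup_le fun j _ => ?_)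
    exact (totalDegree_mul _ _).trans (by simp [totalDegree_X])
  refine ⟨bind₁ g p, by simpa using totalDegree_bind₁_le_mul g hg p, fun y => ?_⟩
  change eval₂Hom (RingHom.id ℝ) y (bind₁ g p) = _
  rw [eval₂Hom_bind₁]
  congr 2 with i
  simp [g, Matrix.mulVec, dotProduct]

end MvPolynomial

section AffineImage

variable {σ : Type*} [Fintype σ] [DecidableEq σ] {M : Matrix σ σ ℝ}

theorem injective_add_mulVec (hM : IsUnit M.det) (x₀ : σ → ℝ) :
    Function.Injective fun y => x₀ + M.mulVec y :=
  fun _ _ h =>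
    Matrix.mulVec_injective_of_isUnit ((Matrix.isUnit_iff_isUnit_det M).2 hM) (add_left_cancel h)

theorem setIntegral_image_add_mulVec (hM : IsUnit M.det) (x₀ : σ → ℝ) {S : Set (σ → ℝ)}
    (hS : MeasurableSet S) (g : (σ → ℝ) → ℝ) :
    ∫ x in (fun y => x₀ + M.mulVec y) '' S, g x = |M.det| * ∫ y in S, g (x₀ + M.mulVec y) := by
  let L := LinearMap.toContinuousLinearMap (Matrix.toLin' M)
  have hL : ∀ y ∈ S, HasFDerivWithinAt (fun y => x₀ + M.mulVec y) L S y := fun y _ =>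
    (L.hasFDerivAt.const_add x₀).hasFDerivWithinAt
  rw [integral_image_eq_integral_abs_det_fderiv_smul volume hS hL
    (injective_add_mulVec hM x₀).injOn]
  simp only [smul_eq_mul, integral_const_mul]
  simp [L, ContinuousLinearMap.det, LinearMap.det_toLin']

theorem exists_abs_eval_le_div_volume_mul_setIntegral_abs {U : Set (σ → ℝ)} (hU : IsOpen U)
    (hne : U.Nonempty) (hbdd : Bornology.IsBounded U) (s : ℕ) :
    ∃ C, 0 < C ∧ ∀ (M : Matrix σ σ ℝ), IsUnit M.det → ∀ (x₀ : σ → ℝ) (f : (σ → ℝ) → ℝ),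
      IntegrableOn f ((fun y => x₀ + M.mulVec y) '' U) →
      ∀ Q : MvPolynomial σ ℝ, Q.totalDegree ≤ s →
      ∫ x in (fun y => x₀ + M.mulVec y) '' U, MvPolynomial.eval x Q *
        (f x - MvPolynomial.eval x Q) = 0 →
      ∀ x ∈ (fun y => x₀ + M.mulVec y) '' U, |MvPolynomial.eval x Q| ≤
        C / volume.real ((fun y => x₀ + M.mulVec y) '' U) *
          ∫ y in (fun y => x₀ + M.mulVec y) '' U, |f y| := by
  obtain ⟨c, hc, hsup⟩ := MvPolynomial.exists_sq_eval_le_mul_setIntegral_sq hU hne hbdd s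
  have hvolU : 0 < volume.real U :=
    ENNReal.toReal_pos (hU.measure_ne_zero volume hne) hbdd.measure_lt_top.ne
  refine ⟨c * volume.real U, mul_pos hc hvolU, fun M hM x₀ f hf Q hQ horth x hx => ?_⟩
  set T := fun y => x₀ + M.mulVec y
  have hT : Continuous T := by fun_prop
  have hdet : 0 < |M.det| := abs_pos.2 hM.ne_zero
  have hcov := setIntegral_image_add_mulVec hM x₀ hU.measurableSet
  have hvol : volume.real (T '' U) = |M.det| * volume.real U := by
    simpa using hcov fun _ => 1
  obtain ⟨R, hR, hRQ⟩ := MvPolynomial.exists_eval_eq_eval_add_mulVec Q M x₀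
  obtain ⟨z, hz, hzmax⟩ := hbdd.isCompact_closure.exists_isMaxOn hne.closure
    (continuous_abs.comp R.continuous_eval).continuousOn
  have hQm : ∀ x ∈ T '' U, |MvPolynomial.eval x Q| ≤ |MvPolynomial.eval z R| := by
    rintro _ ⟨y, hy, rfl⟩
    rw [← hRQ]
    exact hzmax (subset_closure hy)
  have hsq : |MvPolynomial.eval z R| ^ 2 ≤
      c / |M.det| * ∫ x in T '' U, MvPolynomial.eval x Q ^ 2 :=
    calc |MvPolynomial.eval z R| ^ 2 ≤ c * ∫ y in U, MvPolynomial.eval y R ^ 2 := by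
          rw [sq_abs]; exact hsup R (hR.trans hQ) z hz
      _ = c / |M.det| * ∫ x in T '' U, MvPolynomial.eval x Q ^ 2 := by
          simp only [hcov, hRQ, T]
          field_simp
  have hTbdd : Bornology.IsBounded (T '' U) :=
    (hbdd.isCompact_closure.image hT).isBounded.subset (Set.image_mono subset_closure)
  calc |MvPolynomial.eval x Q| ≤ |MvPolynomial.eval z R| := hQm x hx
    _ ≤ c / |M.det| * ∫ y in T '' U, |f y| :=
      le_mul_setIntegral_abs_of_setIntegral_mul_sub_eq_zero
        (hU.measurableSet.image_of_continuousOn_injOn hT.continuousOn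
          (injective_add_mulVec hM x₀).injOn)
        (abs_nonneg _) (by positivity) hf Q.continuous_eval.aestronglyMeasurable hQm
        ((Q.continuous_eval.pow 2).integrableOn_of_isBounded hTbdd) horth hsq
    _ = c * volume.real U / volume.real (T '' U) * ∫ y in T '' U, |f y| := by
      rw [hvol]
      field_simp

end AffineImage

theorem isOpen_setOf_sum_sq_mulVec_lt_one {σ : Type*} [Fintype σ] (P : Matrix σ σ ℝ) :
    IsOpen {x : σ → ℝ | ∑ i, P.mulVec x i ^ 2 < 1} :=
  isOpen_lt (by fun_prop) continuous_const

theorem isBounded_setOf_sum_sq_mulVec_lt_one {σ : Type*} [Fintype σ] [DecidableEq σ]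
    {P : Matrix σ σ ℝ} (hP : IsUnit P.det) :
    Bornology.IsBounded {x : σ → ℝ | ∑ i, P.mulVec x i ^ 2 < 1} := by
  refine ((isCompact_closedBall 0 1).image (f := P⁻¹.mulVec) (by fun_prop)).isBounded.subset ?_
  intro x hx
  refine ⟨P.mulVec x, ?_, by simp [Matrix.mulVec_mulVec, Matrix.nonsing_inv_mul _ hP]⟩
  rw [mem_closedBall_zero_iff, pi_norm_le_iff_of_nonneg zero_le_one]
  intro i
  rw [Real.norm_eq_abs, ← sq_le_one_iff_abs_le_one]
  exact (Finset.single_le_sum (fun j _ => sq_nonneg (P.mulVec x j)) (Finset.mem_univ i)).trans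
    hx.le

theorem statement12_general (n : ℕ) (s : ℕ) (A : Matrix (Fin n) (Fin n) ℝ)
    (hdet : IsUnit A.det)
    (P : Matrix (Fin n) (Fin n) ℝ) (hP : IsUnit P.det)
    (Δ : Set (Fin n → ℝ)) (hΔ : Δ = {x | ∑ i, (P.mulVec x i) ^ 2 < 1})
    (B : ℤ → Set (Fin n → ℝ)) (hB : ∀ k : ℤ, B k = (A ^ k).mulVec '' Δ) :
    ∃ C : ℝ, 0 < C ∧
      ∀ (x₀ : Fin n → ℝ) (k : ℤ) (f : (Fin n → ℝ) → ℝ),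
        IntegrableOn f ((fun y => x₀ + y) '' B k) volume →
        ∀ Q : MvPolynomial (Fin n) ℝ, Q.totalDegree ≤ s →
          (∀ h : MvPolynomial (Fin n) ℝ, h.totalDegree ≤ s →
            ∫ x in (fun y => x₀ + y) '' B k,
              (MvPolynomial.eval x h) * (f x - MvPolynomial.eval x Q) = 0) →
          ∀ x ∈ (fun y => x₀ + y) '' B k,
            |MvPolynomial.eval x Q| ≤
              C / (volume ((fun y => x₀ + y) '' B k)).toReal *
                ∫ y in (fun y => x₀ + y) '' B k, |f y| := by
  obtain ⟨C, hC, hball⟩ := exists_abs_eval_le_div_volume_mul_setIntegral_abs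
    (hΔ ▸ isOpen_setOf_sum_sq_mulVec_lt_one P) ⟨0, by simp [hΔ]⟩
    (hΔ ▸ isBounded_setOf_sum_sq_mulVec_lt_one hP) s
  refine ⟨C, hC, fun x₀ k f hf Q hQ horth x hx => ?_⟩
  have hBk : (fun y => x₀ + y) '' B k = (fun y => x₀ + (A ^ k).mulVec y) '' Δ := by
    rw [hB, Set.image_image]
  rw [hBk] at hf horth hx ⊢
  exact hball _ (hdet.det_zpow k) x₀ f hf Q hQ (horth Q hQ) x hx

/-- On dilated balls `B = x₀ + A^k Δ`, the minimizing polynomial of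
degree `≤ s` of `f ∈ L¹(B)` satisfies `sup_{x∈B} |P_B^s f(x)| ≤ C |B|⁻¹ ∫_B |f|`,
with `C` independent of `f` and of the ball. -/
theorem statement12 (n : ℕ) (s : ℕ) (A : Matrix (Fin n) (Fin n) ℝ)
    (hA : ∀ μ : ℂ, ((A.map (algebraMap ℝ ℂ)).charpoly).IsRoot μ → 1 < ‖μ‖)
    (hdet : IsUnit A.det)
    (P : Matrix (Fin n) (Fin n) ℝ) (hP : IsUnit P.det)
    (Δ : Set (Fin n → ℝ)) (hΔ : Δ = {x | ∑ i, (P.mulVec x i) ^ 2 < 1})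
    (hΔvol : volume Δ = 1)
    (r : ℝ) (hr : 1 < r) (h1 : Δ ⊆ r • Δ) (h2 : r • Δ ⊆ A.mulVec '' Δ)
    (B : ℤ → Set (Fin n → ℝ)) (hB : ∀ k : ℤ, B k = (A ^ k).mulVec '' Δ) :
    ∃ C : ℝ, 0 < C ∧
      ∀ (x₀ : Fin n → ℝ) (k : ℤ) (f : (Fin n → ℝ) → ℝ),
        IntegrableOn f ((fun y => x₀ + y) '' B k) volume →
        ∀ Q : MvPolynomial (Fin n) ℝ, Q.totalDegree ≤ s →
          (∀ h : MvPolynomial (Fin n) ℝ, h.totalDegree ≤ s →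
            ∫ x in (fun y => x₀ + y) '' B k,
              (MvPolynomial.eval x h) * (f x - MvPolynomial.eval x Q) = 0) →
          ∀ x ∈ (fun y => x₀ + y) '' B k,
            |MvPolynomial.eval x Q| ≤
              C / (volume ((fun y => x₀ + y) '' B k)).toReal *
                ∫ y in (fun y => x₀ + y) '' B k, |f y| :=
  statement12_general n s A hdet P hP Δ hΔ B hB
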